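/- arXiv:1309.5650 — 2 statements merged into one kernel-verified Lean document; each statement's English description precedes it below -/
import Mathlib

section
/- Let a < b be coprime positive integers (so that b − a < b is also coprime to b). Every diagonal of P_{b+1} is either a,b-admissible or (b−a),b-admissible, but not both. In other words, the set of a,b-admissible diagonals and the set of (b−a),b-admissible diagonals partition the set of all diagonals of P_{b+1}. -/
/-!
For `0 < s < b - 1`, `s ∈ S(a,b)` iff the window `[s a, (s+1) a)` contains a multiple of `b`,
i.e. iff `a (s+1) mod b < a`; coprimality excludes the residues `0` and `a`. Replacing `a` by
`b - a` turns the residue `r` into `b - r`, so `s` lies in exactly one of `S(a,b)` and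
`S(b-a,b)`. Since `⌊(a-i) b / a⌋ = b - 1 - ⌊i b / a⌋`, each `S(a,b)` is symmetric under
`s ↦ b - 1 - s`, and the two sides of a diagonal `ij` separate `j - i - 1` and `b - j + i`
boundary points, whose sum is `b - 1`. So both admissibilities of `ij` are decided by
`j - i - 1` alone.
-/

/-- `S(a,b) = { ⌊ib/a⌋ : i = 1, …, a-1 }`. -/
def Sab (a b : ℕ) : Finset ℕ := (Finset.Icc 1 (a - 1)).image (fun i => i * b / a)

/-- A diagonal of the polygon `P_{b+1}` with boundary points `0, 1, …, b`:
a pair `i < j` with `j - i ≥ 2` and `(i, j) ≠ (0, b)`. -/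
def IsDiagonal (b i j : ℕ) : Prop := i + 2 ≤ j ∧ j ≤ b ∧ ¬(i = 0 ∧ j = b)

/-- A diagonal `ij` is `a,b`-admissible if it separates `j - i - 1` and `b - j + i`
boundary points, both of which lie in `S(a,b)`. -/
def Admissible (a b : ℕ) (d : ℕ × ℕ) : Prop :=
  IsDiagonal b d.1 d.2 ∧ d.2 - d.1 - 1 ∈ Sab a b ∧ b - d.2 + d.1 ∈ Sab a b

/-- Two diagonals `ij` and `km` cross if `i < k < j < m` or `k < i < m < j`. -/
def Crosses (d d' : ℕ × ℕ) : Prop :=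
  (d.1 < d'.1 ∧ d'.1 < d.2 ∧ d.2 < d'.2) ∨ (d'.1 < d.1 ∧ d.1 < d'.2 ∧ d'.2 < d.2)

/-- An `a,b`-Dyck path: a north/east lattice path from `(0,0)` to `(b,a)` staying weakly
above `y = (a/b) x`.  It is encoded by the height `h u` of its unique east step over the
column interval `[u, u+1]`, for `0 ≤ u < b`; we normalize `h u = a` for `u ≥ b`. -/
structure DyckPath (a b : ℕ) where
  h : ℕ → ℕ
  mono : Monotone h
  norm : ∀ x, b ≤ x → h x = a
  above : ∀ x, x < b → a * (x + 1) ≤ b * h x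

/-- The lattice point `(x, y)` lies on `D` at the bottom of a north step of `D`. -/
def BottomNorth (a b : ℕ) (D : DyckPath a b) (x y : ℕ) : Prop :=
  x ≤ b ∧ (if x = 0 then 0 else D.h (x - 1)) ≤ y ∧ y < D.h x

/-- The laser of slope `a/b` fired northeast from the lattice point `(x, y)` of `D` first
hits `D` in the interior of the east step whose right endpoint has `x`-coordinate `k`;
the associated laser diagonal is `d(P) = (x, k)`.  The laser passes strictly below the
right endpoint of every earlier east step and strictly above the one it hits. -/
def IsLaserDiag (a b : ℕ) (D : DyckPath a b) (x y k : ℕ) : Prop :=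
  x < k ∧ k ≤ b ∧ b * D.h (k - 1) < b * y + a * (k - x) ∧
    ∀ u, x ≤ u → u + 1 < k → b * y + a * (u + 1 - x) < b * D.h u

/-- `F(D)`: the set of laser diagonals `d(P)` of the lattice points `P ≠ (0,0)` at the
bottoms of north steps of `D`. -/
def FD (a b : ℕ) (D : DyckPath a b) : Set (ℕ × ℕ) :=
  { d | ∃ y, BottomNorth a b D d.1 y ∧ (d.1, y) ≠ (0, 0) ∧ IsLaserDiag a b D d.1 y d.2 }

/-- A finite abstract simplicial complex on the ground set `E`: a downward closed
collection of finite subsets of `E`. -/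
structure AbsCplx (E : Type*) where
  faces : Set (Finset E)
  down : ∀ F ∈ faces, ∀ F' ⊆ F, F' ∈ faces

/-- The rational associahedron `Âss(a,b)`: faces are the sets of pairwise noncrossing
`a,b`-admissible diagonals. -/
def hatAss (a b : ℕ) : AbsCplx (ℕ × ℕ) where
  faces := { F | (∀ d ∈ F, Admissible a b d) ∧ ∀ d ∈ F, ∀ d' ∈ F, ¬Crosses d d' }
  down := fun F hF F' hsub =>
    ⟨fun d hd => hF.1 d (hsub hd), fun d hd d' hd' => hF.2 d (hsub hd) d' (hsub hd')⟩

/-- The rational associahedron `Ass(a,b)`: faces are the subsets of the sets `F(D)`,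
as `D` ranges over `a,b`-Dyck paths. -/
def Ass (a b : ℕ) : AbsCplx (ℕ × ℕ) where
  faces := { F | ∃ D : DyckPath a b, ∀ d ∈ F, d ∈ FD a b D }
  down := fun F hF F' hsub =>
    let ⟨D, hD⟩ := hF
    ⟨D, fun d hd => hD d (hsub hd)⟩


section
variable {a b : ℕ}

theorem mem_Sab_iff {s : ℕ} :
    s ∈ Sab a b ↔ ∃ i, 0 < i ∧ i < a ∧ s * a ≤ i * b ∧ i * b < s * a + a := by
  simp only [Sab, Finset.mem_image, Finset.mem_Icc]
  refine exists_congr fun i => ⟨fun ⟨hi, h⟩ => ?_, fun ⟨hi, hia, h⟩ => ?_⟩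
  · rw [Nat.div_eq_iff (by omega)] at h
    omega
  · rw [Nat.div_eq_iff (by omega)]
    omega

theorem mul_mod_ne_zero (hcop : a.Coprime b) {n : ℕ} (hn : 0 < n) (hnb : n < b) :
    a * n % b ≠ 0 := fun h =>
  Nat.not_dvd_of_pos_of_lt hn hnb (hcop.symm.dvd_mul_left.mp (Nat.dvd_of_mod_eq_zero h))

theorem mul_succ_mod_ne_self (hab : a < b) (hcop : a.Coprime b) {s : ℕ} (hs : 0 < s)
    (hsb : s < b) : a * (s + 1) % b ≠ a := by
  intro h
  have : a * s + a ≡ 0 + a [MOD b] := by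
    rw [Nat.ModEq, ← mul_add_one, h, zero_add, Nat.mod_eq_of_lt hab]
  exact mul_mod_ne_zero hcop hs hsb (Nat.ModEq.add_right_cancel' a this)

theorem mem_Sab_iff_mul_succ_mod_lt (hab : a < b) (hcop : a.Coprime b) {s : ℕ} (hs : 0 < s)
    (hsb : s + 1 < b) : s ∈ Sab a b ↔ a * (s + 1) % b < a := by
  have hne := mul_succ_mod_ne_self hab hcop hs (by omega)
  have hpos := Nat.pos_of_ne_zero (mul_mod_ne_zero hcop (n := s + 1) (by omega) hsb)
  have hdiv := Nat.div_add_mod (a * (s + 1)) b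
  have hsa : a * (s + 1) = s * a + a := by ring
  -- the multiple of `b` in `[s a, s a + a)` can only be `b * (a (s+1) / b)`
  rw [mem_Sab_iff]
  constructor
  · rintro ⟨i, -, -, hlo, hhi⟩
    have hq : a * (s + 1) / b = i :=
      Nat.div_eq_of_lt_le (by omega) (by rw [add_one_mul]; omega)
    rw [hq, mul_comm] at hdiv
    omega
  · intro hlt
    set q := a * (s + 1) / b
    have hqb : q * b = b * q := mul_comm q b
    have hsa_pos : 0 < s * a := Nat.mul_pos hs (by omega)
    have hqa : b * q < b * a := by
      rw [mul_comm b a]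
      exact lt_of_le_of_lt (by omega) (Nat.mul_lt_mul_of_pos_left hsb (by omega))
    refine ⟨q, Nat.pos_of_ne_zero ?_, Nat.lt_of_mul_lt_mul_left hqa, by omega, by omega⟩
    rintro hq
    rw [hq, mul_zero] at hdiv
    omega

theorem sub_mul_mod (hab : a ≤ b) {n : ℕ} (h : a * n % b ≠ 0) :
    (b - a) * n % b = b - a * n % b := by
  have hb : 0 < b := Nat.pos_of_ne_zero (by rintro rfl; simp_all)
  have hsum : (b - a) * n % b + a * n % b = b := by
    refine Nat.eq_of_dvd_of_lt_two_mul (by omega) (Nat.dvd_of_mod_eq_zero ?_) ?_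
    · rw [← Nat.add_mod, ← Nat.add_mul, Nat.sub_add_cancel hab, Nat.mul_mod_right]
    · have := Nat.mod_lt ((b - a) * n) hb
      have := Nat.mod_lt (a * n) hb
      omega
  omega

theorem mem_Sab_sub_iff_notMem (hab : a < b) (hcop : a.Coprime b) {s : ℕ} (hs : 0 < s)
    (hsb : s + 1 < b) : s ∈ Sab (b - a) b ↔ s ∉ Sab a b := by
  have ha : 0 < a := Nat.pos_of_ne_zero fun h => by simp [h] at hcop; omega
  have hcop' : (b - a).Coprime b := (Nat.coprime_self_sub_left hab.le).mpr hcop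
  have hr := mul_mod_ne_zero hcop (n := s + 1) (by omega) hsb
  have hra := mul_succ_mod_ne_self hab hcop hs (by omega)
  have hrb := Nat.mod_lt (a * (s + 1)) (by omega : 0 < b)
  rw [mem_Sab_iff_mul_succ_mod_lt (by omega) hcop' hs hsb,
    mem_Sab_iff_mul_succ_mod_lt hab hcop hs hsb, sub_mul_mod hab.le hr]
  omega

theorem mem_Sab_of_add_add_one_eq (hcop : a.Coprime b) {s t : ℕ} (hst : s + t + 1 = b)
    (hs : s ∈ Sab a b) : t ∈ Sab a b := by
  -- `⌊(a - i) b / a⌋ = b - 1 - ⌊i b / a⌋`, because `a ∤ i b`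
  obtain ⟨i, hi, hia, hlo, hhi⟩ := mem_Sab_iff.mp hs
  have hne : i * b ≠ s * a := fun h =>
    Nat.not_dvd_of_pos_of_lt hi hia (hcop.dvd_mul_right.mp ⟨s, by rw [h, mul_comm]⟩)
  have hib : i * b < a * b := Nat.mul_lt_mul_of_pos_right hia (by omega)
  have hta : t * a + s * a + a = a * b := by rw [← hst]; ring
  refine mem_Sab_iff.mpr ⟨a - i, by omega, by omega, ?_, ?_⟩ <;> rw [Nat.sub_mul] <;> omega

theorem admissible_iff_mem_Sab (hcop : a.Coprime b) {i j : ℕ} (hd : IsDiagonal b i j) :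
    Admissible a b (i, j) ↔ j - i - 1 ∈ Sab a b := by
  have hst : (j - i - 1) + (b - j + i) + 1 = b := by
    obtain ⟨_, _, _⟩ := hd
    omega
  exact ⟨fun h => h.2.1, fun h => ⟨hd, h, mem_Sab_of_add_add_one_eq hcop hst h⟩⟩

end

theorem admissible_xor_complement_general (a b : ℕ) (hab : a < b)
    (hcop : Nat.Coprime a b) (i j : ℕ) (hd : IsDiagonal b i j) :
    Xor' (Admissible a b (i, j)) (Admissible (b - a) b (i, j)) := by
  obtain ⟨hij, hjb, hne⟩ := id hd
  rw [admissible_iff_mem_Sab hcop hd,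
    admissible_iff_mem_Sab ((Nat.coprime_self_sub_left hab.le).mpr hcop) hd,
    mem_Sab_sub_iff_notMem hab hcop (by omega) (by omega)]
  exact xor_not_right.mpr Iff.rfl

/-- Every diagonal of `P_{b+1}` is either `a,b`-admissible or `(b-a),b`-admissible, but
not both. -/
theorem admissible_xor_complement (a b : ℕ) (ha : 0 < a) (hab : a < b)
    (hcop : Nat.Coprime a b) (i j : ℕ) (hd : IsDiagonal b i j) :
    Xor' (Admissible a b (i, j)) (Admissible (b - a) b (i, j)) :=
  admissible_xor_complement_general a b hab hcop i j hd
end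

section
/- Let a < b be coprime positive integers and let D be an a,b-Dyck path. Then: (1) for every lattice point P at the bottom of a north step of D, the laser diagonal d(P) is an a,b-admissible diagonal of P_{b+1}; (2) distinct such lattice points P ≠ Q yield distinct diagonals d(P) ≠ d(Q); and (3) for any two such points P and Q, the diagonals d(P) and d(Q) do not cross. Consequently, F(D) is a face of Âss(a,b), so every face of Ass(a,b) is a face of Âss(a,b). -/
/-! A laser fired from `P = (x, y)` rises by `m = h(k-1) - y` before it hits the east step ending
at column `k`; since it passes below the previous east step and above the one it hits,
`k - x - 1 = ⌊mb/a⌋` with `0 < m < a`.  The other side of the diagonal then carries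
`⌊(a-m)b/a⌋` boundary points by the complementary floor identity (here coprimality enters), and
`m` — hence `P` — is recovered from `k - x - 1` because `m ↦ ⌊mb/a⌋` is injective for `a ≤ b`.
Two laser diagonals cannot cross: if `x < x' < k < k'`, the laser from `P' = (x', y')` starts
above the (parallel) laser from `P`, which passes below the step preceding `P'`; so it could not
pass under the step at column `k` that the laser from `P` hits. -/

theorem mul_div_strictMono {a b : ℕ} (ha : 0 < a) (hab : a ≤ b) :
    StrictMono fun m => m * b / a := by
  intro m m' hm
  calc m * b / a < (m * b + a) / a := by rw [Nat.add_div_right _ ha]; exact Nat.lt_succ_self _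
    _ ≤ m' * b / a := Nat.div_le_div_right (by nlinarith)

theorem mul_div_add_sub_mul_div {a b m : ℕ} (hcop : a.Coprime b) (hm : 0 < m) (hma : m < a) :
    m * b / a + (a - m) * b / a = b - 1 := by
  have ha : 0 < a := hm.trans hma
  have hr : m * b % a ≠ 0 := fun h =>
    absurd (Nat.le_of_dvd hm (hcop.dvd_of_dvd_mul_right (Nat.dvd_of_mod_eq_zero h))) (by omega)
  have hb : 0 < b := Nat.pos_of_ne_zero fun h => hr (by simp [h])
  have hq : m * b / a < b :=
    (Nat.div_lt_iff_lt_mul ha).2 (by rw [mul_comm b]; exact Nat.mul_lt_mul_of_pos_right hma hb)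
  have hdiv := Nat.div_add_mod (m * b) a
  have hmod := Nat.mod_lt (m * b) ha
  generalize m * b / a = q at hq hdiv ⊢
  generalize m * b % a = r at hr hdiv hmod
  -- `(a - m) b = a (b - 1 - q) + (a - r)` with `0 < a - r < a`
  suffices (a - m) * b / a = b - 1 - q by omega
  apply Nat.div_eq_of_lt_le
  · zify [hma.le, show q ≤ b - 1 by omega, hb] at hdiv ⊢
    nlinarith
  · zify [hma.le, show q ≤ b - 1 by omega, hb] at hdiv hmod ⊢
    nlinarith [Nat.pos_of_ne_zero hr]

theorem mul_div_mem_Sab {a b m : ℕ} (hm : 0 < m) (hma : m < a) : m * b / a ∈ Sab a b :=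
  Finset.mem_image.2 ⟨m, Finset.mem_Icc.2 ⟨hm, by omega⟩, rfl⟩

theorem pos_of_mem_Sab {a b s : ℕ} (hab : a ≤ b) (hs : s ∈ Sab a b) : 0 < s := by
  obtain ⟨i, hi, rfl⟩ := Finset.mem_image.1 hs
  have hi := Finset.mem_Icc.1 hi
  exact Nat.div_pos (hab.trans (Nat.le_mul_of_pos_left b hi.1)) (by omega)

namespace DyckPath

variable {a b : ℕ} (D : DyckPath a b)

theorem h_le (u : ℕ) : D.h u ≤ a :=
  calc D.h u ≤ D.h (max u b) := D.mono (le_max_left _ _)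
    _ = a := D.norm _ (le_max_right _ _)

theorem h_zero_pos (ha : 0 < a) (hb : 0 < b) : 0 < D.h 0 := by
  have := D.above 0 hb
  exact Nat.pos_of_ne_zero fun h => by rw [h, Nat.mul_zero] at this; omega

end DyckPath

section Laser

variable {a b : ℕ} {D : DyckPath a b} {x y k x' y' k' : ℕ}

theorem BottomNorth.y_pos (hb : 0 < b) (hB : BottomNorth a b D x y) (hne : (x, y) ≠ (0, 0)) :
    0 < y := by
  obtain ⟨-, hlow, hy⟩ := hB
  rcases Nat.eq_zero_or_pos x with rfl | hx
  · exact Nat.pos_of_ne_zero fun h => hne (by rw [h])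
  · rw [if_neg hx.ne'] at hlow
    have ha : 0 < a := Nat.zero_lt_of_lt (hy.trans_le (D.h_le x))
    exact (D.h_zero_pos ha hb).trans_le ((D.mono (Nat.zero_le _)).trans hlow)

namespace IsLaserDiag

theorem lt_h_pred (hL : IsLaserDiag a b D x y k) (hy : y < D.h x) : y < D.h (k - 1) :=
  hy.trans_le (D.mono (by have := hL.1; omega))

theorem add_two_le (hab : a ≤ b) (hL : IsLaserDiag a b D x y k) (hy : y < D.h x) :
    x + 2 ≤ k := by
  obtain ⟨hxk, -, hhit, -⟩ := hL
  by_contra hk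
  obtain rfl : k = x + 1 := by omega
  simp only [Nat.add_sub_cancel, Nat.add_sub_cancel_left, mul_one] at hhit
  nlinarith

theorem sub_sub_one_eq_mul_div (hab : a ≤ b) (hL : IsLaserDiag a b D x y k) (hy : y < D.h x) :
    k - x - 1 = (D.h (k - 1) - y) * b / a := by
  have ha : 0 < a := Nat.zero_lt_of_lt (hy.trans_le (D.h_le x))
  have hk := hL.add_two_le hab hy
  obtain ⟨m, hm⟩ := Nat.exists_eq_add_of_le (hL.lt_h_pred hy).le
  obtain ⟨n, hn⟩ := Nat.exists_eq_add_of_le hk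
  obtain ⟨-, -, hhit, hmiss⟩ := hL
  have hprev := hmiss (k - 2) (by omega) (by omega)
  have hmono : D.h (k - 2) ≤ D.h (k - 1) := D.mono (by omega)
  rw [show k - 2 + 1 - x = n + 1 by omega] at hprev
  rw [show k - x = n + 2 by omega] at hhit
  rw [show k - x - 1 = n + 1 by omega, show D.h (k - 1) - y = m by omega]
  rw [hm] at hhit hmono
  symm
  apply Nat.div_eq_of_lt_le <;> nlinarith

theorem y_eq (hab : a ≤ b) (hL : IsLaserDiag a b D x y k) (hL' : IsLaserDiag a b D x y' k)
    (hy : y < D.h x) (hy' : y' < D.h x) : y = y' := by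
  have ha : 0 < a := Nat.zero_lt_of_lt (hy.trans_le (D.h_le x))
  have hrise : D.h (k - 1) - y = D.h (k - 1) - y' :=
    (mul_div_strictMono ha hab).injective
      ((hL.sub_sub_one_eq_mul_div hab hy).symm.trans (hL'.sub_sub_one_eq_mul_div hab hy'))
  have := hL.lt_h_pred hy
  have := hL'.lt_h_pred hy'
  omega

theorem admissible (hab : a < b) (hcop : a.Coprime b) (hL : IsLaserDiag a b D x y k)
    (hB : BottomNorth a b D x y) (hne : (x, y) ≠ (0, 0)) : Admissible a b (x, k) := by
  have hy := hB.2.2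
  have hlen := hL.sub_sub_one_eq_mul_div hab.le hy
  set m := D.h (k - 1) - y
  have hm0 : 0 < m := by have := hL.lt_h_pred hy; omega
  have hma : m < a := by
    have := hB.y_pos (Nat.zero_lt_of_lt hab) hne
    have := D.h_le (k - 1)
    omega
  have hcompl : b - k + x = (a - m) * b / a := by
    have hsum := mul_div_add_sub_mul_div hcop hm0 hma
    have := hL.1
    have := hL.2.1
    generalize m * b / a = q at hsum hlen
    generalize (a - m) * b / a = q' at hsum ⊢
    omega
  have hmem : b - k + x ∈ Sab a b := hcompl ▸ mul_div_mem_Sab (by omega) (by omega)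
  refine ⟨⟨hL.add_two_le hab.le hy, hL.2.1, fun ⟨hx, hkb⟩ => ?_⟩, hlen ▸ mul_div_mem_Sab hm0 hma,
    hmem⟩
  have := pos_of_mem_Sab hab.le hmem
  change x = 0 at hx
  change k = b at hkb
  omega

theorem not_lt_lt_lt (hL : IsLaserDiag a b D x y k) (hB' : BottomNorth a b D x' y')
    (hL' : IsLaserDiag a b D x' y' k') : ¬(x < x' ∧ x' < k ∧ k < k') := by
  rintro ⟨h1, h2, h3⟩
  obtain ⟨-, hlow', -⟩ := hB'
  rw [if_neg (by omega)] at hlow'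
  have below := hL.2.2.2 (x' - 1) (by omega) (by omega)
  have below' := hL'.2.2.2 (k - 1) (by omega) (by omega)
  have hhit := hL.2.2.1
  rw [show x' - 1 + 1 - x = x' - x by omega] at below
  rw [show k - 1 + 1 - x' = k - x' by omega] at below'
  have hsplit : a * (x' - x) + a * (k - x') = a * (k - x) := by
    rw [← Nat.mul_add]; congr 1; omega
  nlinarith

theorem not_crosses (hL : IsLaserDiag a b D x y k) (hB : BottomNorth a b D x y)
    (hL' : IsLaserDiag a b D x' y' k') (hB' : BottomNorth a b D x' y') :
    ¬Crosses (x, k) (x', k') := by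
  rintro (h | h)
  · exact hL.not_lt_lt_lt hB' hL' h
  · exact hL'.not_lt_lt_lt hB hL h

end IsLaserDiag

theorem mem_hatAss_faces_of_subset_FD (hab : a < b) (hcop : a.Coprime b) {G : Finset (ℕ × ℕ)}
    (hG : ∀ d ∈ G, d ∈ FD a b D) : G ∈ (hatAss a b).faces := by
  refine ⟨fun d hd => ?_, fun d hd d' hd' => ?_⟩
  · obtain ⟨y, hB, hne, hL⟩ := hG d hd
    exact hL.admissible hab hcop hB hne
  · obtain ⟨y, hB, -, hL⟩ := hG d hd
    obtain ⟨y', hB', -, hL'⟩ := hG d' hd'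
    exact hL.not_crosses hB hL' hB'

end Laser

theorem laser_diagonals_admissible_distinct_noncrossing_general (a b : ℕ)
    (hab : a < b) (hcop : Nat.Coprime a b) (D : DyckPath a b) :
    (∀ x y k, BottomNorth a b D x y → (x, y) ≠ (0, 0) → IsLaserDiag a b D x y k →
      Admissible a b (x, k)) ∧
    (∀ x y k x' y' k', BottomNorth a b D x y → (x, y) ≠ (0, 0) →
      IsLaserDiag a b D x y k → BottomNorth a b D x' y' → (x', y') ≠ (0, 0) →
      IsLaserDiag a b D x' y' k' → (x, y) ≠ (x', y') → (x, k) ≠ (x', k')) ∧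
    (∀ x y k x' y' k', BottomNorth a b D x y → (x, y) ≠ (0, 0) →
      IsLaserDiag a b D x y k → BottomNorth a b D x' y' → (x', y') ≠ (0, 0) →
      IsLaserDiag a b D x' y' k' → ¬Crosses (x, k) (x', k')) ∧
    (∀ G : Finset (ℕ × ℕ), (∀ d ∈ G, d ∈ FD a b D) → G ∈ (hatAss a b).faces) ∧
    (Ass a b).faces ⊆ (hatAss a b).faces := by
  refine ⟨fun x y k hB hne hL => hL.admissible hab hcop hB hne, ?_,
    fun x y k x' y' k' hB _ hL hB' _ hL' => hL.not_crosses hB hL' hB',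
    fun G hG => mem_hatAss_faces_of_subset_FD hab hcop hG,
    fun G ⟨D', hD'⟩ => mem_hatAss_faces_of_subset_FD hab hcop hD'⟩
  rintro x y k x' y' k' hB - hL hB' - hL' hne ⟨rfl, rfl⟩
  exact hne (by rw [hL.y_eq hab.le hL' hB.2.2 hB'.2.2])

/-- For any `a,b`-Dyck path `D`: (1) every laser diagonal of `D` is `a,b`-admissible;
(2) distinct lattice points at bottoms of north steps of `D` have distinct laser
diagonals; (3) any two laser diagonals of `D` do not cross.  Consequently every finite
subset of `F(D)` is a face of `Âss(a,b)`, so every face of `Ass(a,b)` is a face of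
`Âss(a,b)`. -/
theorem laser_diagonals_admissible_distinct_noncrossing (a b : ℕ) (ha : 0 < a)
    (hab : a < b) (hcop : Nat.Coprime a b) (D : DyckPath a b) :
    (∀ x y k, BottomNorth a b D x y → (x, y) ≠ (0, 0) → IsLaserDiag a b D x y k →
      Admissible a b (x, k)) ∧
    (∀ x y k x' y' k', BottomNorth a b D x y → (x, y) ≠ (0, 0) →
      IsLaserDiag a b D x y k → BottomNorth a b D x' y' → (x', y') ≠ (0, 0) →
      IsLaserDiag a b D x' y' k' → (x, y) ≠ (x', y') → (x, k) ≠ (x', k')) ∧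
    (∀ x y k x' y' k', BottomNorth a b D x y → (x, y) ≠ (0, 0) →
      IsLaserDiag a b D x y k → BottomNorth a b D x' y' → (x', y') ≠ (0, 0) →
      IsLaserDiag a b D x' y' k' → ¬Crosses (x, k) (x', k')) ∧
    (∀ G : Finset (ℕ × ℕ), (∀ d ∈ G, d ∈ FD a b D) → G ∈ (hatAss a b).faces) ∧
    (Ass a b).faces ⊆ (hatAss a b).faces :=
  laser_diagonals_admissible_distinct_noncrossing_general a b hab hcop D
end
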